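/- Let 0 ≤ a < b, β > −1, γ ∈ ℝ with γ ≠ −1, y ∉ [a,b], and f ∈ C²[a,b]. For N ∈ ℕ with N ≥ 1, set h = (b−a)/N, x_t = a + t·h, and define E_N = ∫_a^b x^β |x−y|^γ f(x) dx − (1/h) ∑_{n=0}^{N−1} ((x_{n+1}^{β+1} − x_n^{β+1})/(β+1)) · ((sgn(x_{n+1}−y)·|x_{n+1}−y|^{γ+1} − sgn(x_n−y)·|x_n−y|^{γ+1})/(γ+1)) · f(x_{n+1/2}). Then there exists K > 0 such that for all N ≥ 1: |E_N| ≤ K/N² if a > 0, or if a = 0 and β ≥ 0, or if a = 0, β ∈ (−1,0) and the derivative of x ↦ |x−y|^γ f(x) vanishes at x = 0; and |E_N| ≤ K/N^{2+β} if a = 0 and β ∈ (−1,0). -/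

import Mathlib

/-!
On a cell `[c, d]` of length `h` with midpoint `m`, expand `φ = |· - y|^γ f` and `|· - y|^γ` to
first order about `m`. The second-order remainders cost `O(h²)` per unit of `∫ x^β`, hence `O(h²)`
in total, and the first-order terms leave exactly `φ'(m) · ∫_c^d x^β (x - m) dx`. When `x^β` is
monotone on the cell this moment is at most `h²` times the oscillation of `x^β` there, and the
oscillations telescope to `|b^β - a^β|`: this gives `O(h²)` for `a > 0` or `β ≥ 0`. For `a = 0`,
`β < 0` the first cell alone contributes `h^(2+β)`. If moreover `φ'(0) = 0`, then `|φ'(x)| = O(x)`,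
and `x_n (x_n^β - x_{n+1}^β) ≤ ∫_{x_n}^{x_{n+1}} x^β` brings the sum back to `O(h² ∫_0^b x^β)`.
-/

open Set intervalIntegral
open MeasureTheory (volume)
open scoped Interval NNReal

/-- The quadrature error `E_N` for `∫_a^b x^β |x−y|^γ f(x) dx`, with `h = (b−a)/N` and
`x_t = a + t·h`, where both singular factors are integrated exactly on each subinterval and
`f` is evaluated at the midpoints. -/
noncomputable def quadError (a b β γ y : ℝ) (f : ℝ → ℝ) (N : ℕ) : ℝ :=
  (∫ x in a..b, x ^ β * |x - y| ^ γ * f x) -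
    (1 / ((b - a) / N)) *
      ∑ n ∈ Finset.range N,
        ((a + ((n : ℝ) + 1) * ((b - a) / N)) ^ (β + 1) -
            (a + (n : ℝ) * ((b - a) / N)) ^ (β + 1)) / (β + 1) *
        ((Real.sign (a + ((n : ℝ) + 1) * ((b - a) / N) - y) *
              |a + ((n : ℝ) + 1) * ((b - a) / N) - y| ^ (γ + 1) -
            Real.sign (a + (n : ℝ) * ((b - a) / N) - y) *
              |a + (n : ℝ) * ((b - a) / N) - y| ^ (γ + 1)) / (γ + 1)) *
        f (a + ((n : ℝ) + 1 / 2) * ((b - a) / N))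

theorem Convex.abs_sub_sub_deriv_mul_le {s : Set ℝ} (hs : Convex ℝ s) {u u' : ℝ → ℝ} {L : ℝ≥0}
    (hu : ∀ x ∈ s, HasDerivWithinAt u (u' x) s x) (hu' : LipschitzOnWith L u' s)
    {x m : ℝ} (hx : x ∈ s) (hm : m ∈ s) :
    |u x - u m - u' m * (x - m)| ≤ L * (x - m) ^ 2 := by
  have hsub : [[m, x]] ⊆ s := hs.ordConnected.uIcc_subset hm hx
  have hderiv : ∀ t ∈ [[m, x]],
      HasDerivWithinAt (fun t => u t - u' m * t) (u' t - u' m) [[m, x]] t := fun t ht =>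
    ((hu t (hsub ht)).mono hsub).sub (by simpa using (hasDerivWithinAt_id t _).const_mul (u' m))
  have hbound : ∀ t ∈ [[m, x]], ‖u' t - u' m‖ ≤ L * |x - m| := fun t ht =>
    calc ‖u' t - u' m‖ = dist (u' t) (u' m) := rfl
      _ ≤ L * dist t m := hu'.dist_le_mul t (hsub ht) m hm
      _ ≤ L * |x - m| := by gcongr; exact abs_sub_left_of_mem_uIcc ht
  have := (convex_uIcc m x).norm_image_sub_le_of_norm_hasDerivWithin_le hderiv hbound
    left_mem_uIcc right_mem_uIcc
  rw [Real.norm_eq_abs, Real.norm_eq_abs] at this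
  calc |u x - u m - u' m * (x - m)| = |u x - u' m * x - (u m - u' m * m)| := by ring_nf
    _ ≤ L * |x - m| * |x - m| := this
    _ = L * (x - m) ^ 2 := by rw [mul_assoc, ← sq, sq_abs]

theorem ContDiffOn.exists_lipschitzOnWith_derivWithin {u : ℝ → ℝ} {a b : ℝ} (hab : a < b)
    (hu : ContDiffOn ℝ 2 u (Icc a b)) :
    ∃ L, LipschitzOnWith L (derivWithin u (Icc a b)) (Icc a b) :=
  (hu.derivWithin (uniqueDiffOn_Icc hab) (by norm_num : (1 : WithTop ℕ∞) + 1 ≤ 2)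
    ).exists_lipschitzOnWith one_ne_zero (convex_Icc a b) isCompact_Icc

theorem contDiffOn_abs_sub_rpow {y γ : ℝ} {s : Set ℝ} {n : ℕ∞} (hy : y ∉ s) :
    ContDiffOn ℝ n (fun x => |x - y| ^ γ) s := fun x hx =>
  have hxy : x - y ≠ 0 := sub_ne_zero.2 (ne_of_mem_of_not_mem hx hy)
  have habs : ContDiffAt ℝ n (fun x => |x - y|) x :=
    (contDiffAt_abs hxy).comp x (contDiffAt_id.sub contDiffAt_const)
  (habs.rpow_const_of_ne (abs_ne_zero.2 hxy)).contDiffWithinAt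

theorem integral_sub_midpoint_eq_zero (c d : ℝ) : ∫ x in c..d, (x - (c + d) / 2) = 0 := by
  simp only [integral_sub intervalIntegrable_id intervalIntegrable_const, integral_id,
    integral_const, smul_eq_mul]
  ring

theorem integral_abs_sub_rpow {γ y c d : ℝ} (hγ : γ ≠ -1) (hcd : c ≤ d) (hy : y ∉ Icc c d) :
    ∫ x in c..d, |x - y| ^ γ =
      (Real.sign (d - y) * |d - y| ^ (γ + 1) - Real.sign (c - y) * |c - y| ^ (γ + 1)) /
        (γ + 1) := by
  rcases lt_or_ge y c with hyc | hcy
  · have hpos : ∀ x ∈ [[c, d]], |x - y| ^ γ = (x - y) ^ γ := fun x hx => by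
      rw [abs_of_pos (by linarith [(uIcc_of_le hcd ▸ hx).1])]
    rw [integral_congr hpos, integral_comp_sub_right (· ^ γ) y,
      integral_rpow (Or.inr ⟨hγ, notMem_uIcc_of_lt (by linarith) (by linarith)⟩),
      Real.sign_of_pos (by linarith : 0 < d - y), Real.sign_of_pos (by linarith : 0 < c - y),
      abs_of_pos (by linarith : 0 < d - y), abs_of_pos (by linarith : 0 < c - y)]
    ring
  · have hdy : d < y := not_le.1 fun h => hy ⟨hcy, h⟩
    have hneg : ∀ x ∈ [[c, d]], |x - y| ^ γ = (y - x) ^ γ := fun x hx => by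
      rw [abs_of_neg (by linarith [(uIcc_of_le hcd ▸ hx).2]), neg_sub]
    rw [integral_congr hneg, integral_comp_sub_left (· ^ γ) y,
      integral_rpow (Or.inr ⟨hγ, notMem_uIcc_of_lt (by linarith) (by linarith)⟩),
      Real.sign_of_neg (by linarith : d - y < 0), Real.sign_of_neg (by linarith : c - y < 0),
      abs_of_neg (by linarith : d - y < 0), abs_of_neg (by linarith : c - y < 0), neg_sub, neg_sub]
    ring

theorem abs_integral_mul_sub_linear_le {ρ φ : ℝ → ℝ} {c d m P R : ℝ} (hcd : c ≤ d)
    (hρ : IntervalIntegrable ρ volume c d) (hρ0 : ∀ x ∈ Icc c d, 0 ≤ ρ x)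
    (hφ : ContinuousOn φ (Icc c d)) (hR : ∀ x ∈ Icc c d, |φ x - φ m - P * (x - m)| ≤ R) :
    |(∫ x in c..d, ρ x * φ x) - (∫ x in c..d, ρ x) * φ m - P * ∫ x in c..d, ρ x * (x - m)| ≤
      (∫ x in c..d, ρ x) * R := by
  have hIcc : [[c, d]] = Icc c d := uIcc_of_le hcd
  have hρφ : IntervalIntegrable (fun x => ρ x * φ x) volume c d :=
    hρ.mul_continuousOn (hIcc ▸ hφ)
  have hρx : IntervalIntegrable (fun x => ρ x * (x - m)) volume c d :=
    hρ.mul_continuousOn (by fun_prop)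
  have hρr : IntervalIntegrable (fun x => ρ x * (φ x - φ m - P * (x - m))) volume c d :=
    hρ.mul_continuousOn (hIcc ▸ by fun_prop)
  have hsplit : (∫ x in c..d, ρ x * φ x) - (∫ x in c..d, ρ x) * φ m - P * ∫ x in c..d, ρ x * (x - m)
      = ∫ x in c..d, ρ x * (φ x - φ m - P * (x - m)) := by
    rw [← integral_mul_const, ← integral_const_mul, ← integral_sub hρφ (hρ.mul_const _),
      ← integral_sub (hρφ.sub (hρ.mul_const _)) (hρx.const_mul _)]
    congr 1; ext x; ring
  rw [hsplit, ← integral_mul_const]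
  refine (abs_integral_le_integral_abs hcd).trans
    (integral_mono_on hcd hρr.abs (hρ.mul_const R) fun x hx => ?_)
  rw [abs_mul, abs_of_nonneg (hρ0 x hx)]
  exact mul_le_mul_of_nonneg_left (hR x hx) (hρ0 x hx)

theorem abs_integral_mul_sub_midpoint_le {ρ : ℝ → ℝ} {c d : ℝ} (hcd : c ≤ d)
    (hρ : IntervalIntegrable ρ volume c d) (hρ0 : ∀ x ∈ Icc c d, 0 ≤ ρ x) :
    |∫ x in c..d, ρ x * (x - (c + d) / 2)| ≤ (d - c) / 2 * ∫ x in c..d, ρ x := by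
  rw [← integral_const_mul]
  refine (abs_integral_le_integral_abs hcd).trans
    (integral_mono_on hcd (hρ.mul_continuousOn (by fun_prop)).abs
      (hρ.const_mul _) fun x hx => ?_)
  rw [abs_mul, abs_of_nonneg (hρ0 x hx), mul_comm]
  exact mul_le_mul_of_nonneg_right (abs_le.2 ⟨by linarith [hx.1], by linarith [hx.2]⟩) (hρ0 x hx)

theorem abs_integral_mul_sub_midpoint_le_of_abs_sub_le {ρ : ℝ → ℝ} {c d ω : ℝ} (hcd : c ≤ d)
    (hρ : IntervalIntegrable ρ volume c d) (hω : ∀ x ∈ Icc c d, |ρ x - ρ c| ≤ ω) :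
    |∫ x in c..d, ρ x * (x - (c + d) / 2)| ≤ ω * (d - c) ^ 2 / 2 := by
  have hshift : ∫ x in c..d, ρ x * (x - (c + d) / 2) =
      ∫ x in c..d, (ρ x - ρ c) * (x - (c + d) / 2) := by
    rw [integral_congr (fun x _ => sub_mul (ρ x) (ρ c) (x - (c + d) / 2)),
      integral_sub (hρ.mul_continuousOn (by fun_prop))
        (intervalIntegrable_const.mul_continuousOn (by fun_prop)),
      integral_const_mul, integral_sub_midpoint_eq_zero, mul_zero, sub_zero]
  have := norm_integral_le_of_norm_le_const
    (f := fun x => (ρ x - ρ c) * (x - (c + d) / 2)) (C := ω * ((d - c) / 2)) fun x hx => by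
      rw [uIoc_of_le hcd] at hx
      rw [Real.norm_eq_abs, abs_mul]
      exact mul_le_mul (hω x ⟨hx.1.le, hx.2⟩)
        (abs_le.2 ⟨by linarith [hx.1], by linarith [hx.2]⟩) (abs_nonneg _)
        ((abs_nonneg _).trans (hω c ⟨le_rfl, hcd⟩))
  rw [hshift, ← Real.norm_eq_abs]
  calc _ ≤ ω * ((d - c) / 2) * |d - c| := this
    _ = ω * (d - c) ^ 2 / 2 := by rw [abs_of_nonneg (sub_nonneg.2 hcd)]; ring

noncomputable def cellError (ρ g w : ℝ → ℝ) (c d : ℝ) : ℝ :=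
  (∫ x in c..d, ρ x * g x * w x) -
    1 / (d - c) * ((∫ x in c..d, ρ x) * (∫ x in c..d, g x)) * w ((c + d) / 2)

theorem abs_cellError_le {ρ g w : ℝ → ℝ} {c d P G R₁ R₂ M : ℝ} (hcd : c < d)
    (hρ : IntervalIntegrable ρ volume c d) (hρ0 : ∀ x ∈ Icc c d, 0 ≤ ρ x)
    (hg : ContinuousOn g (Icc c d)) (hw : ContinuousOn w (Icc c d))
    (hgw : ∀ x ∈ Icc c d,
      |g x * w x - g ((c + d) / 2) * w ((c + d) / 2) - P * (x - (c + d) / 2)| ≤ R₁)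
    (hgR : ∀ x ∈ Icc c d, |g x - g ((c + d) / 2) - G * (x - (c + d) / 2)| ≤ R₂)
    (hM : |w ((c + d) / 2)| ≤ M) :
    |cellError ρ g w c d| ≤
      (∫ x in c..d, ρ x) * (R₁ + M * R₂) + |P| * |∫ x in c..d, ρ x * (x - (c + d) / 2)| := by
  have hplain := abs_integral_mul_sub_linear_le hcd.le intervalIntegrable_const
    (fun _ _ => zero_le_one) hg hgR
  simp only [one_mul, integral_const, smul_eq_mul, mul_one,
    integral_sub_midpoint_eq_zero, mul_zero, sub_zero] at hplain
  have hweighted := abs_integral_mul_sub_linear_le (φ := fun x => g x * w x) hcd.le hρ hρ0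
    (hg.mul hw) hgw
  set m := (c + d) / 2
  set A := ∫ x in c..d, ρ x
  set D := ∫ x in c..d, ρ x * (x - m)
  have hA : 0 ≤ A := integral_nonneg hcd.le hρ0
  have hdc : d - c ≠ 0 := (sub_pos.2 hcd).ne'
  -- The linear part of `g` integrates to zero against the weight `1`; that of `g w` leaves `P * D`.
  have hsplit : cellError ρ g w c d = ((∫ x in c..d, ρ x * (g x * w x)) - A * (g m * w m) - P * D)
      + P * D - A * w m / (d - c) * ((∫ x in c..d, g x) - (d - c) * g m) := by
    simp only [cellError, mul_assoc]
    field_simp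
    ring
  rw [hsplit]
  calc _ ≤ A * R₁ + |P| * |D| + A * M / (d - c) * ((d - c) * R₂) := by
        refine (abs_sub _ _).trans (add_le_add ((abs_add_le _ _).trans
          (add_le_add hweighted (abs_mul _ _).le)) ?_)
        rw [abs_mul, abs_div, abs_mul, abs_of_nonneg hA, abs_of_pos (sub_pos.2 hcd)]
        have hM0 : 0 ≤ M := (abs_nonneg _).trans hM
        exact mul_le_mul (by gcongr) hplain (abs_nonneg _) (by positivity)
    _ = A * (R₁ + M * R₂) + |P| * |D| := by field_simp; ring

theorem rpow_mem_uIcc_rpow {β c d x : ℝ} (hc : 0 ≤ c) (hβ : 0 < c ∨ 0 ≤ β) (hx : x ∈ Icc c d) :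
    x ^ β ∈ [[c ^ β, d ^ β]] := by
  rcases le_or_gt 0 β with hβ0 | hβ0
  · exact Icc_subset_uIcc ⟨Real.rpow_le_rpow hc hx.1 hβ0,
      Real.rpow_le_rpow (hc.trans hx.1) hx.2 hβ0⟩
  · have hc0 : 0 < c := hβ.resolve_right hβ0.not_ge
    exact Icc_subset_uIcc' ⟨Real.rpow_le_rpow_of_nonpos (hc0.trans_le hx.1) hx.2 hβ0.le,
      Real.rpow_le_rpow_of_nonpos hc0 hx.1 hβ0.le⟩

theorem mul_rpow_sub_rpow_le_integral {β c d : ℝ} (hβ : -1 < β) (hβ0 : β ≤ 0) (hc : 0 < c)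
    (hcd : c ≤ d) : c * (c ^ β - d ^ β) ≤ ∫ x in c..d, x ^ β := by
  have hd : 0 < d := hc.trans_le hcd
  have hlower : (d - c) * d ^ β ≤ ∫ x in c..d, x ^ β := by
    have := integral_mono_on hcd intervalIntegrable_const
      (intervalIntegrable_rpow' hβ) fun x hx =>
        Real.rpow_le_rpow_of_nonpos (hc.trans_le hx.1) hx.2 hβ0
    simpa using this
  have hpow : c ^ (β + 1) ≤ d ^ (β + 1) := Real.rpow_le_rpow hc.le hcd (by linarith)
  rw [Real.rpow_add_one hc.ne', Real.rpow_add_one hd.ne'] at hpow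
  nlinarith

theorem sum_range_abs_sub_of_monotone_or_antitone {u : ℕ → ℝ} (hu : Monotone u ∨ Antitone u)
    (N : ℕ) : ∑ n ∈ Finset.range N, |u (n + 1) - u n| = |u N - u 0| := by
  rcases hu with hu | hu
  · rw [abs_of_nonneg (sub_nonneg.2 (hu (Nat.zero_le N))), ← Finset.sum_range_sub]
    exact Finset.sum_congr rfl fun n _ => abs_of_nonneg (sub_nonneg.2 (hu n.le_succ))
  · rw [abs_of_nonpos (sub_nonpos.2 (hu (Nat.zero_le N))), neg_sub, ← Finset.sum_range_sub']
    refine Finset.sum_congr rfl fun n _ => ?_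
    rw [abs_of_nonpos (sub_nonpos.2 (hu n.le_succ)), neg_sub]

noncomputable def midMoment (β c d : ℝ) : ℝ := ∫ x in c..d, x ^ β * (x - (c + d) / 2)

section midMoment

variable {β : ℝ}

theorem abs_midMoment_le_mul_integral (hβ : -1 < β) {c d : ℝ} (hc : 0 ≤ c) (hcd : c ≤ d) :
    |midMoment β c d| ≤ (d - c) / 2 * ∫ x in c..d, x ^ β :=
  abs_integral_mul_sub_midpoint_le hcd (intervalIntegrable_rpow' hβ)
    fun _ hx => Real.rpow_nonneg (hc.trans hx.1) β

theorem abs_midMoment_le_abs_rpow_sub (hβ : -1 < β) {c d : ℝ} (hc : 0 ≤ c) (hcd : c ≤ d)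
    (hcase : 0 < c ∨ 0 ≤ β) : |midMoment β c d| ≤ |d ^ β - c ^ β| * (d - c) ^ 2 / 2 :=
  abs_integral_mul_sub_midpoint_le_of_abs_sub_le hcd (intervalIntegrable_rpow' hβ)
    fun _ hx => abs_sub_left_of_mem_uIcc (rpow_mem_uIcc_rpow hc hcase hx)

variable {h M : ℝ} {p : ℕ → ℝ} {N : ℕ}

theorem sum_mul_abs_midMoment_le {a : ℝ} (hβ : -1 < β) (ha : 0 ≤ a) (hh : 0 ≤ h)
    (hcase : 0 < a ∨ 0 ≤ β) (hM : 0 ≤ M) (hp : ∀ n < N, p n ≤ M) :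
    ∑ n ∈ Finset.range N, p n * |midMoment β (a + n * h) (a + (n + 1) * h)| ≤
      M * |(a + N * h) ^ β - a ^ β| * h ^ 2 / 2 := by
  set u : ℕ → ℝ := fun n => (a + n * h) ^ β
  have hnode : ∀ n : ℕ, 0 ≤ a + n * h := fun n => by positivity
  have hu : Monotone u ∨ Antitone u := by
    rcases le_or_gt 0 β with hβ0 | hβ0
    · exact Or.inl fun _ _ hmn => Real.rpow_le_rpow (hnode _) (by gcongr) hβ0
    · have ha0 : 0 < a := hcase.resolve_right hβ0.not_ge
      exact Or.inr fun _ _ hmn =>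
        Real.rpow_le_rpow_of_nonpos (by positivity) (by gcongr) hβ0.le
  calc _ ≤ ∑ n ∈ Finset.range N, M * (|u (n + 1) - u n| * h ^ 2 / 2) := by
        refine Finset.sum_le_sum fun n hn => mul_le_mul (hp n (Finset.mem_range.1 hn)) ?_
          (abs_nonneg _) hM
        have := abs_midMoment_le_abs_rpow_sub hβ (hnode n) (d := a + (n + 1) * h) (by linarith)
          (hcase.imp_left fun ha0 => by positivity)
        rw [show a + (n + 1) * h - (a + n * h) = h by ring] at this
        simpa only [u, Nat.cast_succ] using this
    _ = M * |(a + N * h) ^ β - a ^ β| * h ^ 2 / 2 := by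
        rw [← Finset.mul_sum, ← Finset.sum_div, ← Finset.sum_mul,
          sum_range_abs_sub_of_monotone_or_antitone hu]
        simp only [u, Nat.cast_zero, zero_mul, add_zero]
        ring

theorem sum_mul_abs_midMoment_le_rpow (hβ : -1 < β) (hβ0 : β ≤ 0) (hh : 0 < h) (hM : 0 ≤ M)
    (hp : ∀ n < N, p n ≤ M) :
    ∑ n ∈ Finset.range N, p n * |midMoment β (n * h) ((n + 1) * h)| ≤
      M * (1 / (2 * (β + 1)) + 1 / 2) * h ^ (2 + β) := by
  have hβ1 : 0 < β + 1 := by linarith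
  rcases N with _ | N
  · simp only [Finset.range_zero, Finset.sum_empty]; positivity
  -- The first cell, where `x ^ β` is unbounded, is estimated crudely; the others telescope.
  rw [Finset.sum_range_succ']
  have hfirst : p 0 * |midMoment β ((0 : ℕ) * h) (((0 : ℕ) + 1) * h)| ≤
      M * (h / 2 * (h ^ (β + 1) / (β + 1))) := by
    refine mul_le_mul (hp 0 N.succ_pos) ?_ (abs_nonneg _) hM
    have := abs_midMoment_le_mul_integral hβ le_rfl hh.le
    simpa [integral_rpow (Or.inl hβ), Real.zero_rpow hβ1.ne'] using this
  have hrest := sum_mul_abs_midMoment_le hβ hh.le hh.le (Or.inl hh) hM (p := fun n => p (n + 1))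
    (N := N) fun n hn => hp (n + 1) (by omega)
  have hgrid : ∀ n : ℕ, midMoment β (h + n * h) (h + (n + 1) * h) =
      midMoment β (((n + 1 : ℕ) : ℝ) * h) ((((n + 1 : ℕ) : ℝ) + 1) * h) := fun n => by
    push_cast; ring_nf
  have hlast : |(h + N * h) ^ β - h ^ β| ≤ h ^ β := by
    have h0 : 0 ≤ (h + N * h) ^ β := Real.rpow_nonneg (by positivity) β
    have h1 : (h + N * h) ^ β ≤ h ^ β :=
      Real.rpow_le_rpow_of_nonpos hh (by simp only [le_add_iff_nonneg_right]; positivity) hβ0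
    rw [abs_sub_comm, abs_of_nonneg (by linarith)]
    linarith
  simp only [hgrid] at hrest
  have hpow : h ^ (2 + β) = h ^ β * h ^ 2 := by
    rw [add_comm, Real.rpow_add hh]; norm_cast
  calc _ ≤ M * h ^ β * h ^ 2 / 2 + M * (h / 2 * (h ^ (β + 1) / (β + 1))) := by
        refine add_le_add (hrest.trans ?_) hfirst
        gcongr
    _ = M * (1 / (2 * (β + 1)) + 1 / 2) * h ^ (2 + β) := by
        rw [hpow, Real.rpow_add_one hh.ne']
        field_simp
        ring

theorem mul_abs_midMoment_le_integral (hβ : -1 < β) (hβ0 : β ≤ 0) (hh : 0 < h) (n : ℕ) :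
    (n + 1 / 2) * h * |midMoment β (n * h) ((n + 1) * h)| ≤
      h ^ 2 * ∫ x in n * h..(n + 1) * h, x ^ β := by
  rcases n with _ | n
  · have hD := abs_midMoment_le_mul_integral hβ le_rfl hh.le
    have hI : 0 ≤ ∫ x in (0 : ℝ)..h, x ^ β :=
      integral_nonneg hh.le fun x hx => Real.rpow_nonneg hx.1 β
    simp only [Nat.cast_zero, zero_mul, zero_add, one_mul, sub_zero] at hD ⊢
    nlinarith
  · set c : ℝ := ((n + 1 : ℕ) : ℝ) * h
    have hc : 0 < c := by positivity
    have hgrid : (((n + 1 : ℕ) : ℝ) + 1) * h = c + h := by ring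
    rw [hgrid]
    have hD := abs_midMoment_le_abs_rpow_sub hβ hc.le (d := c + h) (by linarith) (Or.inl hc)
    rw [abs_sub_comm, abs_of_nonneg (sub_nonneg.2 (Real.rpow_le_rpow_of_nonpos hc
      (by linarith) hβ0)), add_sub_cancel_left] at hD
    have hint := mul_rpow_sub_rpow_le_integral hβ hβ0 hc (d := c + h) (by linarith)
    have hweight : ((n + 1 : ℕ) + 1 / 2 : ℝ) * h ≤ 2 * c := by
      simp only [c]; push_cast; nlinarith
    calc _ ≤ 2 * c * ((c ^ β - (c + h) ^ β) * h ^ 2 / 2) :=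
          mul_le_mul hweight hD (abs_nonneg _) (by positivity)
      _ = h ^ 2 * (c * (c ^ β - (c + h) ^ β)) := by ring
      _ ≤ h ^ 2 * ∫ x in c..c + h, x ^ β := by gcongr

theorem sum_mul_abs_midMoment_le_of_le_mul {L : ℝ} (hβ : -1 < β) (hβ0 : β ≤ 0) (hh : 0 < h)
    (hL : 0 ≤ L) (hp : ∀ n < N, p n ≤ L * ((n + 1 / 2) * h)) :
    ∑ n ∈ Finset.range N, p n * |midMoment β (n * h) ((n + 1) * h)| ≤
      L * h ^ 2 * ((N * h) ^ (β + 1) / (β + 1)) := by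
  have hcells := sum_integral_adjacent_intervals (a := fun k : ℕ => (k : ℝ) * h)
    (f := fun x => x ^ β) (μ := volume) (n := N)
    fun _ _ => intervalIntegrable_rpow' hβ
  simp only [Nat.cast_succ, Nat.cast_zero, zero_mul] at hcells
  calc _ ≤ ∑ n ∈ Finset.range N, L * (h ^ 2 * ∫ x in n * h..(n + 1) * h, x ^ β) := by
        refine Finset.sum_le_sum fun n hn => ?_
        refine (mul_le_mul_of_nonneg_right (hp n (Finset.mem_range.1 hn)) (abs_nonneg _)).trans ?_
        rw [mul_assoc]
        exact mul_le_mul_of_nonneg_left (mul_abs_midMoment_le_integral hβ hβ0 hh n) hL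
    _ = L * h ^ 2 * ((N * h) ^ (β + 1) / (β + 1)) := by
        rw [← Finset.mul_sum, ← Finset.mul_sum, hcells, integral_rpow (Or.inl hβ),
          Real.zero_rpow (by linarith), sub_zero, mul_assoc]

end midMoment

theorem abs_cellError_rpow_le {s : Set ℝ} (hs : Convex ℝ s) {g w φ' g' : ℝ → ℝ} {Lφ Lg : ℝ≥0}
    {β c d M : ℝ} (hβ : -1 < β) (hc : 0 ≤ c) (hcd : c < d) (hcds : Icc c d ⊆ s)
    (hw : ContinuousOn w s) (hM : ∀ x ∈ s, |w x| ≤ M)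
    (hφ : ∀ x ∈ s, HasDerivWithinAt (fun x => g x * w x) (φ' x) s x)
    (hφ' : LipschitzOnWith Lφ φ' s)
    (hg : ∀ x ∈ s, HasDerivWithinAt g (g' x) s x) (hg' : LipschitzOnWith Lg g' s) :
    |cellError (· ^ β) g w c d| ≤
      (∫ x in c..d, x ^ β) * ((Lφ + M * Lg) * (d - c) ^ 2 / 4) +
        |φ' ((c + d) / 2)| * |midMoment β c d| := by
  have hm : (c + d) / 2 ∈ s := hcds ⟨by linarith, by linarith⟩
  have htaylor : ∀ {u u' : ℝ → ℝ} {L : ℝ≥0}, (∀ x ∈ s, HasDerivWithinAt u (u' x) s x) →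
      LipschitzOnWith L u' s → ∀ x ∈ Icc c d,
        |u x - u ((c + d) / 2) - u' ((c + d) / 2) * (x - (c + d) / 2)| ≤ L * (d - c) ^ 2 / 4 :=
    fun hu hu' x hx => by
      refine (hs.abs_sub_sub_deriv_mul_le hu hu' (hcds hx) hm).trans ?_
      rw [mul_div_assoc, show (d - c) ^ 2 / 4 = ((d - c) / 2) ^ 2 by ring]
      exact mul_le_mul_of_nonneg_left (sq_le_sq' (by linarith [hx.1]) (by linarith [hx.2]))
        (NNReal.coe_nonneg _)
  have := abs_cellError_le hcd (intervalIntegrable_rpow' hβ)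
    (fun x hx => Real.rpow_nonneg (hc.trans hx.1) β)
    (fun x hx => (hg x (hcds hx)).continuousWithinAt.mono hcds) (hw.mono hcds)
    (htaylor hφ hφ') (htaylor hg hg') (hM _ hm)
  rw [midMoment]
  convert this using 2
  ring

section UniformGrid

variable {a b : ℝ} {N : ℕ}

theorem add_nat_mul_div_mem_Icc (hab : a ≤ b) {n : ℕ} (hn : n ≤ N) :
    a + n * ((b - a) / N) ∈ Icc a b := by
  rcases N.eq_zero_or_pos with rfl | hN
  · simp [Nat.le_zero.1 hn, hab]
  have hN' : (0 : ℝ) < N := by exact_mod_cast hN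
  have hn' : (n : ℝ) / N ≤ 1 := (div_le_one hN').2 (by exact_mod_cast hn)
  refine ⟨le_add_of_nonneg_right (by positivity), ?_⟩
  calc a + n * ((b - a) / N) = a + (n / N) * (b - a) := by ring
    _ ≤ a + 1 * (b - a) := by gcongr
    _ = b := by ring

theorem add_nat_add_half_mul_div_mem_Icc (hab : a ≤ b) {n : ℕ} (hn : n < N) :
    a + (n + 1 / 2) * ((b - a) / N) ∈ Icc a b := by
  have hl := add_nat_mul_div_mem_Icc hab hn.le
  have hr := add_nat_mul_div_mem_Icc hab hn
  have hh : 0 ≤ (b - a) / N := div_nonneg (sub_nonneg.2 hab) N.cast_nonneg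
  push_cast at hr
  exact ⟨by nlinarith [hl.1], by nlinarith [hr.2]⟩

theorem add_nat_mul_div_self (hN : N ≠ 0) : a + N * ((b - a) / N) = b := by
  rw [mul_div_cancel₀ _ (Nat.cast_ne_zero.2 hN : (N : ℝ) ≠ 0), add_sub_cancel]

theorem sum_integral_uniform_cells {f : ℝ → ℝ} (hab : a ≤ b) (hN : N ≠ 0)
    (hf : IntervalIntegrable f volume a b) :
    ∑ n ∈ Finset.range N, ∫ x in a + n * ((b - a) / N)..a + (n + 1) * ((b - a) / N), f x =
      ∫ x in a..b, f x := by
  have hcells := sum_integral_adjacent_intervals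
    (a := fun k : ℕ => a + k * ((b - a) / N)) (f := f) (μ := volume) (n := N) fun k hk =>
      hf.mono_set (uIcc_subset_uIcc (Icc_subset_uIcc (add_nat_mul_div_mem_Icc hab hk.le))
        (Icc_subset_uIcc (add_nat_mul_div_mem_Icc hab hk)))
  simp only [Nat.cast_succ, Nat.cast_zero, zero_mul, add_zero] at hcells
  rwa [add_nat_mul_div_self hN] at hcells

end UniformGrid

theorem quadError_eq_sum_cellError {a b β γ y : ℝ} {f : ℝ → ℝ} {N : ℕ} (hab : a ≤ b)
    (hβ : -1 < β) (hγ : γ ≠ -1) (hy : y ∉ Icc a b) (hN : N ≠ 0)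
    (hint : IntervalIntegrable (fun x => x ^ β * |x - y| ^ γ * f x) volume a b) :
    quadError a b β γ y f N = ∑ n ∈ Finset.range N, cellError (· ^ β) (fun x => |x - y| ^ γ) f
      (a + n * ((b - a) / N)) (a + (n + 1) * ((b - a) / N)) := by
  rw [quadError, ← sum_integral_uniform_cells hab hN hint, Finset.mul_sum,
    ← Finset.sum_sub_distrib]
  refine Finset.sum_congr rfl fun n hn => ?_
  set h := (b - a) / N
  have hh : 0 ≤ h := div_nonneg (sub_nonneg.2 hab) N.cast_nonneg
  have hy' : y ∉ Icc (a + n * h) (a + (n + 1) * h) := fun hmem =>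
    hy (Icc_subset_Icc (add_nat_mul_div_mem_Icc hab (Finset.mem_range.1 hn).le).1
      (by simpa using (add_nat_mul_div_mem_Icc hab (Finset.mem_range.1 hn)).2) hmem)
  rw [cellError, integral_rpow (Or.inl hβ), integral_abs_sub_rpow hγ (by nlinarith) hy',
    show a + (n + 1) * h - (a + n * h) = h by ring,
    show (a + n * h + (a + (n + 1) * h)) / 2 = a + (n + 1 / 2) * h by ring]
  ring

noncomputable def slopeMomentSum (u' : ℝ → ℝ) (a b β : ℝ) (N : ℕ) : ℝ :=
  ∑ n ∈ Finset.range N, |u' (a + (n + 1 / 2) * ((b - a) / N))| *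
    |midMoment β (a + n * ((b - a) / N)) (a + (n + 1) * ((b - a) / N))|

theorem abs_quadError_le {a b β γ y M : ℝ} {f φ' g' : ℝ → ℝ} {Lφ Lg : ℝ≥0} {N : ℕ}
    (ha : 0 ≤ a) (hab : a < b) (hβ : -1 < β) (hγ : γ ≠ -1) (hy : y ∉ Icc a b) (hN : N ≠ 0)
    (hf : ContinuousOn f (Icc a b)) (hM : ∀ x ∈ Icc a b, |f x| ≤ M)
    (hφ : ∀ x ∈ Icc a b, HasDerivWithinAt (fun x => |x - y| ^ γ * f x) (φ' x) (Icc a b) x)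
    (hφ' : LipschitzOnWith Lφ φ' (Icc a b))
    (hg : ∀ x ∈ Icc a b, HasDerivWithinAt (fun x => |x - y| ^ γ) (g' x) (Icc a b) x)
    (hg' : LipschitzOnWith Lg g' (Icc a b)) :
    |quadError a b β γ y f N| ≤
      (b ^ (β + 1) - a ^ (β + 1)) / (β + 1) * ((Lφ + M * Lg) * ((b - a) / N) ^ 2 / 4) +
        slopeMomentSum φ' a b β N := by
  have hgc : ContinuousOn (fun x => |x - y| ^ γ) (Icc a b) := fun x hx =>
    (hg x hx).continuousWithinAt
  have hint : IntervalIntegrable (fun x => x ^ β * |x - y| ^ γ * f x) volume a b := by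
    rw [← uIcc_of_le hab.le] at hgc hf
    exact ((intervalIntegrable_rpow' hβ).mul_continuousOn hgc).mul_continuousOn hf
  rw [slopeMomentSum, quadError_eq_sum_cellError hab.le hβ hγ hy hN hint,
    ← integral_rpow (Or.inl hβ),
    ← sum_integral_uniform_cells hab.le hN (intervalIntegrable_rpow' hβ),
    Finset.sum_mul, ← Finset.sum_add_distrib]
  refine (Finset.abs_sum_le_sum_abs _ _).trans (Finset.sum_le_sum fun n hn => ?_)
  set h := (b - a) / N
  have hh : 0 < h := div_pos (sub_pos.2 hab) (by positivity)
  have hnode := add_nat_mul_div_mem_Icc hab.le (Finset.mem_range.1 hn).le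
  have hnode' := add_nat_mul_div_mem_Icc hab.le (Finset.mem_range.1 hn)
  push_cast at hnode'
  have := abs_cellError_rpow_le (convex_Icc a b) hβ (ha.trans hnode.1)
    (by linarith : a + n * h < a + (n + 1) * h) (Icc_subset_Icc hnode.1 hnode'.2) hf hM
    hφ hφ' hg hg'
  rwa [show a + (n + 1) * h - (a + n * h) = h by ring,
    show (a + n * h + (a + (n + 1) * h)) / 2 = a + (n + 1 / 2) * h by ring] at this

theorem exists_abs_quadError_le_add_slopeMomentSum {a b β γ y : ℝ} {f : ℝ → ℝ} (ha : 0 ≤ a)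
    (hab : a < b) (hβ : -1 < β) (hγ : γ ≠ -1) (hy : y ∉ Icc a b)
    (hf : ContDiffOn ℝ 2 f (Icc a b)) :
    ∃ T, 0 ≤ T ∧ ∀ N : ℕ, N ≠ 0 → |quadError a b β γ y f N| ≤
      T / N ^ 2 + slopeMomentSum (derivWithin (fun x => |x - y| ^ γ * f x) (Icc a b)) a b β N := by
  have hg : ContDiffOn ℝ 2 (fun x => |x - y| ^ γ) (Icc a b) := contDiffOn_abs_sub_rpow (n := 2) hy
  have hφ := hg.mul hf
  have hderiv : ∀ {u : ℝ → ℝ}, ContDiffOn ℝ 2 u (Icc a b) → ∀ x ∈ Icc a b,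
      HasDerivWithinAt u (derivWithin u (Icc a b) x) (Icc a b) x := fun hu x hx =>
    (hu.differentiableOn (by norm_num) x hx).hasDerivWithinAt
  obtain ⟨Lφ, hLφ⟩ := hφ.exists_lipschitzOnWith_derivWithin hab
  obtain ⟨Lg, hLg⟩ := hg.exists_lipschitzOnWith_derivWithin hab
  obtain ⟨M, hM⟩ := isCompact_Icc.exists_bound_of_continuousOn hf.continuousOn
  have hM0 : 0 ≤ M := (norm_nonneg _).trans (hM a ⟨le_rfl, hab.le⟩)
  have hA : 0 ≤ (b ^ (β + 1) - a ^ (β + 1)) / (β + 1) :=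
    div_nonneg (sub_nonneg.2 (Real.rpow_le_rpow ha hab.le (by linarith))) (by linarith)
  refine ⟨(b ^ (β + 1) - a ^ (β + 1)) / (β + 1) * ((Lφ + M * Lg) * (b - a) ^ 2 / 4),
    by positivity, fun N hN => ?_⟩
  refine (abs_quadError_le ha hab hβ hγ hy hN hf.continuousOn hM (hderiv hφ) hLφ (hderiv hg)
    hLg).trans (le_of_eq ?_)
  rw [div_pow]
  ring

theorem exists_slopeMomentSum_le_div_sq {a b β : ℝ} {u' : ℝ → ℝ} {L : ℝ≥0} (ha : 0 ≤ a)
    (hab : a < b) (hβ : -1 < β) (hu' : LipschitzOnWith L u' (Icc a b)) :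
    ∃ C, 0 ≤ C ∧ ∀ N : ℕ, N ≠ 0 →
      (0 < a ∨ (a = 0 ∧ 0 ≤ β) ∨ (a = 0 ∧ β < 0 ∧ u' 0 = 0)) →
        slopeMomentSum u' a b β N ≤ C / N ^ 2 := by
  obtain ⟨M, hM⟩ := isCompact_Icc.exists_bound_of_continuousOn hu'.continuousOn
  have hM0 : 0 ≤ M := (norm_nonneg _).trans (hM a ⟨le_rfl, hab.le⟩)
  have hb : 0 ≤ b ^ (β + 1) / (β + 1) :=
    div_nonneg (Real.rpow_nonneg (ha.trans hab.le) _) (by linarith)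
  refine ⟨(M * |b ^ β - a ^ β| / 2 + L * (b ^ (β + 1) / (β + 1))) * (b - a) ^ 2,
    by positivity, fun N hN hcase => ?_⟩
  set h := (b - a) / N
  have hh : 0 < h := div_pos (sub_pos.2 hab) (by positivity)
  have hC : (M * |b ^ β - a ^ β| / 2 + L * (b ^ (β + 1) / (β + 1))) * (b - a) ^ 2 / N ^ 2 =
      (M * |b ^ β - a ^ β| / 2 + L * (b ^ (β + 1) / (β + 1))) * h ^ 2 := by
    rw [div_pow]; ring
  have hp : ∀ n < N, |u' (a + (n + 1 / 2) * h)| ≤ M := fun n hn =>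
    hM _ (add_nat_add_half_mul_div_mem_Icc hab.le hn)
  have hlast : a + N * h = b := add_nat_mul_div_self hN
  rw [hC]
  rcases hcase with ha0 | ⟨-, hβ0⟩ | ⟨rfl, hβ0, hu0⟩
  · refine (sum_mul_abs_midMoment_le hβ ha hh.le (Or.inl ha0) hM0 hp).trans ?_
    rw [hlast]; nlinarith [mul_nonneg (mul_nonneg L.coe_nonneg hb) (sq_nonneg h)]
  · refine (sum_mul_abs_midMoment_le hβ ha hh.le (Or.inr hβ0) hM0 hp).trans ?_
    rw [hlast]; nlinarith [mul_nonneg (mul_nonneg L.coe_nonneg hb) (sq_nonneg h)]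
  · have hlin : ∀ n < N, |u' ((n + 1 / 2) * h)| ≤ L * ((n + 1 / 2) * h) := fun n hn => by
      have hmid : (n + 1 / 2) * h ∈ Icc 0 b := by
        simpa only [zero_add] using add_nat_add_half_mul_div_mem_Icc hab.le hn
      simpa only [Real.dist_eq, hu0, sub_zero, abs_of_nonneg hmid.1] using
        hu'.dist_le_mul _ hmid 0 ⟨le_rfl, hab.le⟩
    simp only [slopeMomentSum, zero_add] at hlast ⊢
    refine (sum_mul_abs_midMoment_le_of_le_mul hβ hβ0.le hh L.coe_nonneg hlin).trans ?_
    rw [hlast]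
    nlinarith [mul_nonneg (mul_nonneg hM0 (abs_nonneg (b ^ β - 0 ^ β))) (sq_nonneg h)]

theorem exists_slopeMomentSum_le_div_rpow {a b β : ℝ} {u' : ℝ → ℝ} (hab : a < b) (hβ : -1 < β)
    (hu' : ContinuousOn u' (Icc a b)) :
    ∃ C, 0 ≤ C ∧ ∀ N : ℕ, N ≠ 0 → a = 0 ∧ β < 0 → slopeMomentSum u' a b β N ≤ C / N ^ (2 + β) := by
  obtain ⟨M, hM⟩ := isCompact_Icc.exists_bound_of_continuousOn hu'
  have hM0 : 0 ≤ M := (norm_nonneg _).trans (hM a ⟨le_rfl, hab.le⟩)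
  have hβ1 : 0 < β + 1 := by linarith
  have hba : 0 ≤ (b - a) ^ (2 + β) := Real.rpow_nonneg (sub_nonneg.2 hab.le) _
  refine ⟨M * (1 / (2 * (β + 1)) + 1 / 2) * (b - a) ^ (2 + β), by positivity,
    fun N hN ⟨ha0, hβ0⟩ => ?_⟩
  subst ha0
  have hh : 0 < (b - 0) / N := div_pos (sub_pos.2 hab) (by positivity)
  have hp : ∀ n < N, |u' ((n + 1 / 2) * ((b - 0) / N))| ≤ M := fun n hn => by
    simpa using hM _ (add_nat_add_half_mul_div_mem_Icc hab.le hn)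
  simp only [slopeMomentSum, zero_add]
  refine (sum_mul_abs_midMoment_le_rpow hβ hβ0.le hh hM0 hp).trans (le_of_eq ?_)
  rw [Real.div_rpow (sub_nonneg.2 hab.le) N.cast_nonneg]
  ring

theorem stmt15 (a b β γ y : ℝ) (ha : 0 ≤ a) (hab : a < b) (hβ : -1 < β) (hγ : γ ≠ -1)
    (hy : y ∉ Set.Icc a b) (f : ℝ → ℝ) (hf : ContDiffOn ℝ 2 f (Set.Icc a b)) :
    ∃ K : ℝ, 0 < K ∧ ∀ N : ℕ, 1 ≤ N →
      ((0 < a ∨ (a = 0 ∧ 0 ≤ β) ∨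
          (a = 0 ∧ β < 0 ∧
            derivWithin (fun x => |x - y| ^ γ * f x) (Set.Icc a b) 0 = 0) →
        |quadError a b β γ y f N| ≤ K / (N : ℝ) ^ 2) ∧
      (a = 0 ∧ β < 0 →
        |quadError a b β γ y f N| ≤ K / (N : ℝ) ^ (2 + β))) := by
  obtain ⟨L, hL⟩ :=
    ((contDiffOn_abs_sub_rpow (n := 2) hy).mul hf).exists_lipschitzOnWith_derivWithin hab
  obtain ⟨T, hT, hE⟩ := exists_abs_quadError_le_add_slopeMomentSum ha hab hβ hγ hy hf
  obtain ⟨C₁, hC₁, hS₁⟩ := exists_slopeMomentSum_le_div_sq ha hab hβ hL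
  obtain ⟨C₂, hC₂, hS₂⟩ := exists_slopeMomentSum_le_div_rpow hab hβ hL.continuousOn
  refine ⟨1 + T + C₁ + C₂, by positivity, fun N hN => ?_⟩
  have hN0 : N ≠ 0 := by omega
  refine ⟨fun hcase => ?_, fun hcase => ?_⟩
  · calc _ ≤ T / N ^ 2 + C₁ / N ^ 2 := (hE N hN0).trans (by gcongr; exact hS₁ N hN0 hcase)
      _ ≤ _ := by rw [← add_div]; gcongr ?_ / _; linarith
  · have hpow : (N : ℝ) ^ (2 + β) ≤ N ^ 2 := by
      rw [← Real.rpow_natCast]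
      exact Real.rpow_le_rpow_of_exponent_le (by exact_mod_cast hN) (by push_cast; linarith)
    calc _ ≤ T / N ^ (2 + β) + C₂ / N ^ (2 + β) :=
          (hE N hN0).trans (add_le_add (by gcongr) (hS₂ N hN0 hcase))
      _ ≤ _ := by rw [← add_div]; gcongr ?_ / _; linarith
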